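/- arXiv:math/9909177 — 8 statements merged into one kernel-verified Lean document; each statement's English description precedes it below -/
import Mathlib

section
/- The expected value of the squared determinant of a random n×n matrix with independent uniform ±1 entries equals n!. -/
/-!
Expand `det²` by the Leibniz formula into a double sum over pairs of permutations `(σ, τ)`.
Summed over all sign patterns, the `(σ, τ)` term factors over the rows, and row `i` contributes
zero as soon as `σ i ≠ τ i`, being then the product of two independent `±1` entries. Only the
`n!` diagonal terms survive, each with weight `2 ^ (n * n)`.
-/

open Matrix Finset

section PlusMinusOne

variable {R : Type*} [CommRing R]

def Bool.toSign (b : Bool) : R := if b then 1 else -1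

@[simp] lemma Bool.toSign_mul_self (b : Bool) : (b.toSign : R) * b.toSign = 1 := by
  cases b <;> simp [Bool.toSign]

@[simp] lemma Bool.toSign_not (b : Bool) : ((!b).toSign : R) = -b.toSign := by
  cases b <;> simp [Bool.toSign]

variable {ι κ : Type*} [Fintype ι] [DecidableEq ι] [Fintype κ] [DecidableEq κ]

lemma sum_toSign_mul_toSign (a b : ι) :
    ∑ g : ι → Bool, ((g a).toSign : R) * (g b).toSign =
      if a = b then 2 ^ Fintype.card ι else 0 := by
  split_ifs with hab
  · subst hab
    simp
  · -- flipping the coordinate `a` negates the summand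
    refine Finset.sum_ninvolution (fun g => Function.update g a !(g a)) (fun g => ?_)
      (fun g _ => ?_) (fun _ => mem_univ _) (fun g => by simp)
    · simp [Function.update_of_ne (Ne.symm hab)]
    · simpa [funext_iff] using ⟨a, by simp⟩

lemma sum_prod_toSign_mul_toSign (σ τ : ι → κ) :
    ∑ f : ι → κ → Bool, ∏ i, ((f i (σ i)).toSign : R) * (f i (τ i)).toSign =
      if σ = τ then 2 ^ (Fintype.card ι * Fintype.card κ) else 0 := by
  simp_rw [← Fintype.prod_sum fun i (g : κ → Bool) => ((g (σ i)).toSign : R) * (g (τ i)).toSign,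
    sum_toSign_mul_toSign, Fintype.prod_ite_zero, funext_iff, prod_const, card_univ, pow_mul']

end PlusMinusOne

lemma Matrix.det_sq_eq_sum_sum {R n : Type*} [CommRing R] [Fintype n] [DecidableEq n]
    (M : Matrix n n R) :
    M.det ^ 2 = ∑ σ : Equiv.Perm n, ∑ τ : Equiv.Perm n,
      (Equiv.Perm.sign σ * Equiv.Perm.sign τ : ℤ) * ∏ i, M i (σ i) * M i (τ i) := by
  rw [← det_transpose, det_apply', sq, sum_mul_sum]
  refine sum_congr rfl fun σ _ => sum_congr rfl fun τ _ => ?_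
  simp only [transpose_apply, prod_mul_distrib]
  push_cast
  ring

lemma sum_det_toSign_sq {R ι : Type*} [CommRing R] [Fintype ι] [DecidableEq ι] :
    ∑ f : ι → ι → Bool, (of fun i j => ((f i j).toSign : R)).det ^ 2 =
      (Fintype.card ι).factorial * 2 ^ (Fintype.card ι * Fintype.card ι) := by
  simp_rw [det_sq_eq_sum_sum, of_apply]
  rw [sum_comm]
  have diagonal (σ : Equiv.Perm ι) : ∑ f : ι → ι → Bool, ∑ τ : Equiv.Perm ι,
      ((Equiv.Perm.sign σ * Equiv.Perm.sign τ : ℤ) : R) *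
        ∏ i, ((f i (σ i)).toSign : R) * (f i (τ i)).toSign =
      2 ^ (Fintype.card ι * Fintype.card ι) := by
    rw [sum_comm]
    simp_rw [← mul_sum, sum_prod_toSign_mul_toSign, DFunLike.coe_fn_eq]
    simp [← Units.val_mul]
  rw [sum_congr rfl fun σ _ => diagonal σ, sum_const, card_univ, Fintype.card_perm, nsmul_eq_mul]

/-- Szekeres–Turán: the expected value of the squared determinant of a random `n×n`
matrix with independent uniform ±1 entries equals `n!`. -/
theorem expected_sq_det_pm_one (n : ℕ) :
    (∑ f : Fin n → Fin n → Bool,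
        (Matrix.det (Matrix.of fun i j => if f i j then (1 : ℝ) else -1)) ^ 2)
      / 2 ^ (n * n) = Nat.factorial n := by
  have h := sum_det_toSign_sq (R := ℝ) (ι := Fin n)
  simp only [Bool.toSign, Fintype.card_fin] at h
  rw [h, mul_div_cancel_right₀ _ (by positivity)]
end

section
/- The expected value of the squared determinant of a random d×d 0/1-matrix equals (d+1)!/2^{2d}. -/
/-!
Expanding both determinants by the Leibniz formula, the sum over all `f` of
`det(A_f) * det(B_f)`, where the rows of `A_f` and `B_f` are selected by `f`, factors over the
rows into `(card n)! * det (Aᵀ * B)`: a Cauchy–Binet identity for sums over all row selections.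
For the matrix whose rows are all `0/1` vectors of length `d`, the Gram matrix `Aᵀ * A` counts
the vectors with `1` at two prescribed coordinates, so it is `2^d / 4 • (I + J)`, of determinant
`(2^d / 4)^d * (d + 1)`.
-/

open Matrix Finset

namespace Matrix

variable {m n R : Type*} [Fintype m] [Fintype n] [DecidableEq n] [CommRing R]

theorem det_eq_sum_sign_mul_prod_apply_perm (M : Matrix n n R) :
    M.det = ∑ σ : Equiv.Perm n, (Equiv.Perm.sign σ : R) * ∏ i, M i (σ i) := by
  rw [← det_transpose, det_apply']
  rfl

theorem sum_det_submatrix_mul_det_submatrix (A B : Matrix m n R) :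
    ∑ f : n → m, (A.submatrix f id).det * (B.submatrix f id).det
      = (Fintype.card n).factorial * (Aᵀ * B).det := by
  calc ∑ f : n → m, (A.submatrix f id).det * (B.submatrix f id).det
      = ∑ σ : Equiv.Perm n, ∑ τ : Equiv.Perm n,
          (Equiv.Perm.sign σ : R) * Equiv.Perm.sign τ *
            ∑ f : n → m, ∏ i, A (f i) (σ i) * B (f i) (τ i) := by
        simp_rw [det_eq_sum_sign_mul_prod_apply_perm, sum_mul_sum, mul_sum, submatrix_apply,
          id_eq, prod_mul_distrib]
        rw [sum_comm]
        refine sum_congr rfl fun σ _ => ?_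
        rw [sum_comm]
        exact sum_congr rfl fun τ _ => sum_congr rfl fun f _ => by ring
    _ = ∑ σ : Equiv.Perm n, (Equiv.Perm.sign σ : R) * ((Aᵀ * B).submatrix σ id).det := by
        refine sum_congr rfl fun σ _ => ?_
        rw [det_eq_sum_sign_mul_prod_apply_perm, mul_sum]
        refine sum_congr rfl fun τ _ => ?_
        rw [← Fintype.prod_sum fun i a => A a (σ i) * B a (τ i), mul_assoc]
        simp [mul_apply]
    _ = ∑ _σ : Equiv.Perm n, (Aᵀ * B).det := by
        refine sum_congr rfl fun σ _ => ?_
        rw [det_permute, ← mul_assoc, ← Int.cast_mul, ← Units.val_mul, Int.units_mul_self,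
          Units.val_one, Int.cast_one, one_mul]
    _ = (Fintype.card n).factorial * (Aᵀ * B).det := by
        simp [Fintype.card_perm]

theorem det_one_add_of_const_one :
    (1 + of fun _ _ => 1 : Matrix n n R).det = Fintype.card n + 1 := by
  have hrank_one : (of fun _ _ => 1 : Matrix n n R)
      = replicateCol Unit (fun _ : n => (1 : R)) * replicateRow Unit (fun _ : n => (1 : R)) := by
    ext
    simp [mul_apply]
  rw [hrank_one, det_one_add_replicateCol_mul_replicateRow]
  simp [dotProduct, add_comm]

end Matrix

theorem sum_prod_mem_ite_one_zero {ι R : Type*} [Fintype ι] [DecidableEq ι] [CommSemiring R]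
    (s : Finset ι) : ∑ x : ι → Bool, ∏ i ∈ s, (if x i then (1 : R) else 0) = 2 ^ #sᶜ := by
  calc ∑ x : ι → Bool, ∏ i ∈ s, (if x i then (1 : R) else 0)
      = ∑ x : ι → Bool, ∏ i, if i ∈ s then (if x i then (1 : R) else 0) else 1 := by
        simp [prod_ite_mem]
    _ = ∏ i, ∑ b : Bool, if i ∈ s then (if b then (1 : R) else 0) else 1 := by
        rw [Fintype.prod_sum]
    _ = ∏ i : ι, if i ∈ s then 1 else 2 := by
        refine prod_congr rfl fun i _ => ?_
        split_ifs <;> simp [one_add_one_eq_two]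
    _ = 2 ^ #sᶜ := by
        rw [prod_ite, prod_const_one, one_mul, prod_const]
        simp [compl_eq_univ_sdiff, filter_not]

/-- `(zeroOneRows ι).submatrix f id` is the `0/1` matrix whose `i`-th row is `f i`. -/
def zeroOneRows (ι : Type*) : Matrix (ι → Bool) ι ℝ :=
  of fun x i => if x i then 1 else 0

theorem zeroOneRows_transpose_mul_self (ι : Type*) [Fintype ι] [DecidableEq ι] :
    (zeroOneRows ι)ᵀ * zeroOneRows ι = (2 ^ Fintype.card ι / 4 : ℝ) • (1 + of fun _ _ => 1) := by
  ext j k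
  rw [mul_apply, Matrix.smul_apply, Matrix.add_apply, of_apply, smul_eq_mul]
  have hcard (s : Finset ι) : (2 : ℝ) ^ #sᶜ * 2 ^ #s = 2 ^ Fintype.card ι := by
    rw [← pow_add, card_compl_add_card]
  rcases eq_or_ne j k with rfl | hjk
  · rw [one_apply_eq]
    calc ∑ x : ι → Bool, (if x j then (1 : ℝ) else 0) * (if x j then 1 else 0)
        = ∑ x : ι → Bool, ∏ i ∈ {j}, (if x i then (1 : ℝ) else 0) :=
          sum_congr rfl fun x _ => by rw [prod_singleton]; split_ifs <;> simp
      _ = 2 ^ Fintype.card ι / 4 * (1 + 1) := by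
        rw [sum_prod_mem_ite_one_zero, ← hcard {j}, card_singleton]
        ring
  · rw [one_apply_ne hjk]
    calc ∑ x : ι → Bool, (if x j then (1 : ℝ) else 0) * (if x k then 1 else 0)
        = ∑ x : ι → Bool, ∏ i ∈ {j, k}, (if x i then (1 : ℝ) else 0) := by
          simp only [prod_pair hjk]
      _ = 2 ^ Fintype.card ι / 4 * (0 + 1) := by
        rw [sum_prod_mem_ite_one_zero, ← hcard {j, k}, card_pair hjk]
        ring

/-- The expected value of the squared determinant of a random `d×d` 0/1-matrix equals
`(d+1)!/2^(2d)`. -/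
theorem expected_sq_det_zero_one (d : ℕ) :
    (∑ f : Fin d → Fin d → Bool,
        (Matrix.det (Matrix.of fun i j => if f i j then (1 : ℝ) else 0)) ^ 2)
      / 2 ^ (d * d) = Nat.factorial (d + 1) / 2 ^ (2 * d) := by
  have hsum : ∑ f : Fin d → Fin d → Bool,
      (Matrix.det (Matrix.of fun i j => if f i j then (1 : ℝ) else 0)) ^ 2
        = d.factorial * ((2 ^ d / 4) ^ d * (d + 1)) := by
    calc _ = ∑ f : Fin d → Fin d → Bool,
          ((zeroOneRows (Fin d)).submatrix f id).det * ((zeroOneRows (Fin d)).submatrix f id).det :=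
          sum_congr rfl fun f _ => sq _
      _ = d.factorial * ((2 ^ d / 4) ^ d * (d + 1)) := by
          rw [sum_det_submatrix_mul_det_submatrix, zeroOneRows_transpose_mul_self, det_smul,
            det_one_add_of_const_one, Fintype.card_fin]
  have hpow : (2 : ℝ) ^ (2 * d) = 4 ^ d := by
    rw [pow_mul]
    norm_num
  rw [hsum, Nat.factorial_succ, hpow, div_pow, ← pow_mul]
  field_simp
  push_cast
  ring
end

section
/- There exists a d×d 0/1-matrix A with |det(A)| ≥ √((d+1)!)/2^d. -/
/-!
Let `A` run over the `2^(d²)` matrices whose rows are indicator vectors of subsets of `Fin d`.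
Expanding `det A ^ 2` over pairs of permutations and summing each row independently turns the
total into `d! · det G`, where `G = (2^d / 4) (I + J)` is the Gram matrix of all indicator
vectors: `G a b` counts the subsets containing `a` and `b`. Since `det (I + J) = d + 1`, the mean
of `det A ^ 2` is `(d+1)! / 4^d`, and some `A` is at least as large as the mean.
-/

open Matrix Finset Nat

section GramIdentity

variable {R n ι : Type*} [CommRing R] [Fintype n] [DecidableEq n] [Fintype ι]

theorem sum_sign_mul_prod_perm_apply (G : Matrix n n R) (σ : Equiv.Perm n) :
    ∑ τ : Equiv.Perm n, (Equiv.Perm.sign τ : R) * ∏ i, G (σ i) (τ i)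
      = Equiv.Perm.sign σ * G.det := by
  rw [← det_permute, ← det_transpose, det_apply']
  rfl

theorem sum_det_sq_submatrix_eq_factorial_mul_det (V : Matrix ι n R) :
    ∑ ω : n → ι, (V.submatrix ω id).det ^ 2 = (Fintype.card n)! * (Vᵀ * V).det := by
  set G := Vᵀ * V
  have hG : ∀ a b, ∑ r, V r a * V r b = G a b := fun a b => by simp [G, mul_apply]
  have hsign : ∀ σ : Equiv.Perm n, (Equiv.Perm.sign σ : R) * Equiv.Perm.sign σ = 1 := fun σ => by
    rw [← Int.cast_mul, ← Units.val_mul, Int.units_mul_self, Units.val_one, Int.cast_one]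
  calc ∑ ω : n → ι, (V.submatrix ω id).det ^ 2
      = ∑ ω : n → ι, ∑ σ : Equiv.Perm n, ∑ τ : Equiv.Perm n,
          (Equiv.Perm.sign σ : R) * Equiv.Perm.sign τ * ∏ i, V (ω i) (σ i) * V (ω i) (τ i) := by
        refine sum_congr rfl fun ω _ => ?_
        rw [← det_transpose, sq, det_apply', sum_mul_sum]
        refine sum_congr rfl fun σ _ => sum_congr rfl fun τ _ => ?_
        simp only [transpose_apply, submatrix_apply, id, prod_mul_distrib]
        ring
    _ = ∑ σ : Equiv.Perm n, (Equiv.Perm.sign σ : R) *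
          ∑ τ : Equiv.Perm n, (Equiv.Perm.sign τ : R) * ∏ i, G (σ i) (τ i) := by
        rw [sum_comm]
        refine sum_congr rfl fun σ _ => ?_
        rw [sum_comm, mul_sum]
        refine sum_congr rfl fun τ _ => ?_
        rw [← mul_sum, ← Fintype.prod_sum (fun i r => V r (σ i) * V r (τ i))]
        simp only [hG, mul_assoc]
    _ = (Fintype.card n)! * G.det := by
        simp [sum_sign_mul_prod_perm_apply, ← mul_assoc, hsign, Fintype.card_perm]

end GramIdentity

theorem card_filter_superset {α : Type*} [Fintype α] [DecidableEq α] (s : Finset α) :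
    #{t : Finset α | s ⊆ t} = 2 ^ (Fintype.card α - #s) := by
  rw [← Finset.card_univ, ← card_Icc_finset (subset_univ s)]
  congr 1
  ext t
  simp

theorem det_one_add_ones {m : Type*} [Fintype m] [DecidableEq m] :
    (1 + of fun _ _ => 1 : Matrix m m ℝ).det = Fintype.card m + 1 := by
  have hJ : (of fun _ _ => 1 : Matrix m m ℝ) =
      replicateCol Unit (fun _ : m => (1 : ℝ)) * replicateRow Unit (fun _ : m => (1 : ℝ)) := by
    rw [← vecMulVec_eq]; ext i j; simp [vecMulVec_apply]
  rw [hJ, det_one_add_replicateCol_mul_replicateRow]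
  simp [dotProduct, add_comm]

section SubsetIndicator

variable (α : Type*) [Fintype α] [DecidableEq α]

def subsetIndicatorMatrix : Matrix (Finset α) α ℝ :=
  of fun S a => if a ∈ S then 1 else 0

theorem subsetIndicatorMatrix_transpose_mul_self :
    (subsetIndicatorMatrix α)ᵀ * subsetIndicatorMatrix α
      = (2 ^ Fintype.card α / 4 : ℝ) • (1 + of fun _ _ => 1) := by
  ext a b
  have hmem : ∀ S : Finset α, subsetIndicatorMatrix α S a * subsetIndicatorMatrix α S b
      = if {a, b} ⊆ S then 1 else 0 := fun S => by
    simp only [subsetIndicatorMatrix, of_apply, insert_subset_iff, singleton_subset_iff,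
      ite_zero_mul_ite_zero, one_mul]
  have hcount : ∑ S, subsetIndicatorMatrix α S a * subsetIndicatorMatrix α S b
      = (2 : ℝ) ^ Fintype.card α / 2 ^ #{a, b} := by
    rw [sum_congr rfl fun S _ => hmem S, sum_boole, card_filter_superset, Nat.cast_pow,
      Nat.cast_ofNat, pow_sub₀ _ two_ne_zero (card_le_univ _), div_eq_mul_inv]
  simp only [mul_apply, transpose_apply, hcount, Matrix.smul_apply, Matrix.add_apply, one_apply,
    of_apply, smul_eq_mul]
  by_cases hab : a = b
  · subst hab
    rw [pair_eq_singleton, card_singleton, if_pos rfl]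
    ring
  · rw [card_pair hab, if_neg hab]
    ring

theorem sum_det_sq_submatrix_subsetIndicatorMatrix :
    ∑ ω : α → Finset α, ((subsetIndicatorMatrix α).submatrix ω id).det ^ 2
      = (Fintype.card α + 1)! * (2 ^ Fintype.card α) ^ Fintype.card α / 4 ^ Fintype.card α := by
  rw [sum_det_sq_submatrix_eq_factorial_mul_det, subsetIndicatorMatrix_transpose_mul_self,
    det_smul, det_one_add_ones, factorial_succ, div_pow]
  push_cast
  ring

end SubsetIndicator

/-- There exists a `d×d` 0/1-matrix `A` with `|det A| ≥ √((d+1)!)/2^d`. -/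
theorem exists_zero_one_matrix_large_det (d : ℕ) :
    ∃ A : Matrix (Fin d) (Fin d) ℝ,
      (∀ i j, A i j = 0 ∨ A i j = 1) ∧
      Real.sqrt (Nat.factorial (d + 1)) / 2 ^ d ≤ |A.det| := by
  obtain ⟨ω, -, hω⟩ : ∃ ω ∈ (univ : Finset (Fin d → Finset (Fin d))),
      ((d + 1)! / 4 ^ d : ℝ) ≤ ((subsetIndicatorMatrix (Fin d)).submatrix ω id).det ^ 2 := by
    refine exists_le_of_sum_le univ_nonempty ?_
    rw [sum_det_sq_submatrix_subsetIndicatorMatrix, sum_const, Finset.card_univ,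
      Fintype.card_fun, Fintype.card_finset, Fintype.card_fin, nsmul_eq_mul]
    exact le_of_eq (by push_cast; ring)
  refine ⟨(subsetIndicatorMatrix (Fin d)).submatrix ω id, fun i j => ?_, ?_⟩
  · by_cases h : j ∈ ω i <;> simp [subsetIndicatorMatrix, h]
  · have h4 : ((2 : ℝ) ^ d) ^ 2 = 4 ^ d := by rw [← pow_mul, mul_comm, pow_mul]; norm_num
    rwa [← sq_le_sq₀ (by positivity) (abs_nonneg _), div_pow, Real.sq_sqrt (by positivity),
      sq_abs, h4]
end

section
/- The absolute value of the determinant of any d×d 0/1-matrix is at most √(d+1)^{d+1} / 2^d. -/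
/-!
Border the 0/1-matrix `A` by a row and a column of ones and replace each entry `a` of `A` by
`1 - 2a`. The result `Â` is a `(d+1) × (d+1)` matrix with entries `±1`, and subtracting its first
row from the others gives `det Â = (-2)^d det A`. For a real `n × n` matrix `B`, AM-GM applied to
the eigenvalues of the positive semidefinite matrix `Bᵀ B` gives `det B ^ 2 ≤ (‖B‖_F² / n)^n`;
for a `±1`-matrix `‖B‖_F² = n²`, so `|det Â| ≤ √(d+1)^(d+1)`.
-/

open Matrix Finset

theorem Real.prod_le_mean_pow {ι : Type*} [Fintype ι] (z : ι → ℝ) (hz : ∀ i, 0 ≤ z i) :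
    ∏ i, z i ≤ ((∑ i, z i) / Fintype.card ι) ^ Fintype.card ι := by
  rcases isEmpty_or_nonempty ι with hι | hι
  · simp
  set n := Fintype.card ι
  have hn : n ≠ 0 := Fintype.card_ne_zero
  have amgm := Real.geom_mean_le_arith_mean_weighted univ (fun _ ↦ (n : ℝ)⁻¹) z
    (fun _ _ ↦ by positivity) (by simp [n, hn]) (fun i _ ↦ hz i)
  calc ∏ i, z i = (∏ i, z i ^ (n⁻¹ : ℝ)) ^ n := by
        rw [← prod_pow]
        exact prod_congr rfl fun i _ ↦ (Real.rpow_inv_natCast_pow (hz i) hn).symm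
    _ ≤ (∑ i, (n : ℝ)⁻¹ * z i) ^ n :=
        pow_le_pow_left₀ (prod_nonneg fun i _ ↦ Real.rpow_nonneg (hz i) _) amgm n
    _ = ((∑ i, z i) / n) ^ n := by rw [← mul_sum, inv_mul_eq_div]

theorem Matrix.PosSemidef.det_le_trace_div_card_pow {ι : Type*} [Fintype ι] [DecidableEq ι]
    {M : Matrix ι ι ℝ} (hM : M.PosSemidef) :
    M.det ≤ (M.trace / Fintype.card ι) ^ Fintype.card ι := by
  rw [hM.isHermitian.det_eq_prod_eigenvalues, hM.isHermitian.trace_eq_sum_eigenvalues]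
  simpa using Real.prod_le_mean_pow _ hM.eigenvalues_nonneg

theorem Matrix.det_sq_le_sum_sq_div_card_pow {ι : Type*} [Fintype ι] [DecidableEq ι]
    (B : Matrix ι ι ℝ) :
    B.det ^ 2 ≤ ((∑ i, ∑ j, B i j ^ 2) / Fintype.card ι) ^ Fintype.card ι := by
  have htrace : (Bᴴ * B).trace = ∑ i, ∑ j, B i j ^ 2 := by
    simp only [trace, diag_apply, mul_apply, conjTranspose_apply, star_trivial, sq]
    exact sum_comm
  calc B.det ^ 2 = (Bᴴ * B).det := by rw [det_mul, det_conjTranspose, star_trivial, sq]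
    _ ≤ _ := (posSemidef_conjTranspose_mul_self B).det_le_trace_div_card_pow
    _ = _ := by rw [htrace]

theorem Matrix.abs_det_le_sqrt_card_pow {ι : Type*} [Fintype ι] [DecidableEq ι]
    (B : Matrix ι ι ℝ) (hB : ∀ i j, B i j ^ 2 = 1) :
    |B.det| ≤ √(Fintype.card ι) ^ Fintype.card ι := by
  set n := Fintype.card ι
  have hdet : B.det ^ 2 ≤ (n : ℝ) ^ n := by
    simpa [hB, n, mul_self_div_self] using B.det_sq_le_sum_sq_div_card_pow
  refine abs_le_of_sq_le_sq ?_ (by positivity)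
  rwa [← pow_mul, mul_comm, pow_mul, Real.sq_sqrt n.cast_nonneg]

section SignBorder

variable {n R : Type*}

/-- The `±1`-matrix `Â` attached to a `0/1`-matrix `A`. -/
def Matrix.signBorder [CommRing R] (A : Matrix n n R) : Matrix (Unit ⊕ n) (Unit ⊕ n) R :=
  fromBlocks 1 (of fun _ _ ↦ 1) (of fun _ _ ↦ 1) (of fun i j ↦ 1 - 2 * A i j)

theorem Matrix.det_signBorder [Fintype n] [DecidableEq n] [CommRing R] (A : Matrix n n R) :
    A.signBorder.det = (-2) ^ Fintype.card n * A.det := by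
  have hrows : A.signBorder.det = (fromBlocks 1 (of fun _ _ ↦ 1) 0 ((-2 : R) • A)).det :=
    det_eq_of_forall_row_eq_smul_add_const (Sum.elim 0 1) (Sum.inl ()) rfl <| by
      rintro (i | i) (j | j) <;> simp [signBorder]; ring
  rw [hrows, det_fromBlocks_zero₂₁, det_one, one_mul, det_smul]

theorem Matrix.signBorder_apply_sq [CommRing R] {A : Matrix n n R}
    (hA : ∀ i j, A i j = 0 ∨ A i j = 1) (i j : Unit ⊕ n) : A.signBorder i j ^ 2 = 1 := by
  rcases i with i | i <;> rcases j with j | j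
  all_goals simp [signBorder]
  rcases hA i j with h | h <;> norm_num [h]

end SignBorder

/-- Hadamard bound for 0/1-matrices: `|det A| ≤ √(d+1)^(d+1) / 2^d`. -/
theorem abs_det_zero_one_le (d : ℕ) (A : Matrix (Fin d) (Fin d) ℝ)
    (hA : ∀ i j, A i j = 0 ∨ A i j = 1) :
    |A.det| ≤ Real.sqrt (d + 1) ^ (d + 1) / 2 ^ d := by
  have hÂ := A.signBorder.abs_det_le_sqrt_card_pow (signBorder_apply_sq hA)
  rw [det_signBorder, abs_mul, abs_pow, abs_neg, abs_two] at hÂ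
  simp only [Fintype.card_sum, Fintype.card_unit, Fintype.card_fin, add_comm 1 d] at hÂ
  rw [le_div_iff₀ (by positivity), mul_comm]
  exact_mod_cast hÂ
end

section
/- If an (n+1)×(n+1) ±1-matrix M satisfies |det(M)| = (n+1)^{(n+1)/2} with n+1 > 2, then n+1 is divisible by 4. -/
/-!
If `M` is a `±1`-matrix of order `n` with `|det M| = n ^ (n / 2)`, the Gram matrix `M * Mᵀ` is
positive semidefinite with determinant `n ^ n` and trace `n * n`, so AM-GM forces all its
eigenvalues to equal `n`, i.e. `M * Mᵀ = n • 1`: the rows are pairwise orthogonal. For three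
pairwise orthogonal `±1`-vectors `x, y, z` one has `(x + y) ⬝ (x + z) = x ⬝ x = n`, while every
summand `(xᵢ + yᵢ)(xᵢ + zᵢ)` is `0` or `4`.
-/

open Matrix Finset
open scoped ComplexOrder

theorem Real.eq_of_prod_eq_pow_of_sum_eq_mul {ι : Type*} [Fintype ι] {x : ι → ℝ} {c : ℝ}
    (hc : 0 ≤ c) (hx : ∀ i, 0 ≤ x i) (hprod : ∏ i, x i = c ^ Fintype.card ι)
    (hsum : ∑ i, x i = Fintype.card ι * c) (i : ι) : x i = c := by
  have : Nonempty ι := ⟨i⟩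
  have hN : Fintype.card ι ≠ 0 := Fintype.card_ne_zero
  set w : ι → ℝ := fun _ => (Fintype.card ι : ℝ)⁻¹
  have hgeom : ∏ j, x j ^ w j = c := by
    rw [Real.finsetProd_rpow _ _ fun j _ => hx j, hprod, Real.pow_rpow_inv_natCast hc hN]
  have harith : ∑ j, w j * x j = c := by
    rw [← mul_sum, hsum, inv_mul_cancel_left₀ (by exact_mod_cast hN)]
  have hmean := (Real.geom_mean_eq_arith_mean_weighted_iff_of_pos' univ w x
    (fun _ _ => by positivity) (by simp [w, hN]) fun j _ => hx j).mp
    (hgeom.trans harith.symm) i (mem_univ i)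
  rwa [harith] at hmean

theorem Matrix.PosSemidef.eq_smul_one_of_det_eq_of_trace_eq {𝕜 ι : Type*} [RCLike 𝕜]
    [Fintype ι] [DecidableEq ι] {A : Matrix ι ι 𝕜} (hA : A.PosSemidef) {c : ℝ} (hc : 0 ≤ c)
    (hdet : A.det = (c : 𝕜) ^ Fintype.card ι) (htrace : A.trace = Fintype.card ι * (c : 𝕜)) :
    A = (c : 𝕜) • 1 := by
  have hH := hA.isHermitian
  have heig : ∀ i, hH.eigenvalues i = c := by
    refine Real.eq_of_prod_eq_pow_of_sum_eq_mul hc hA.eigenvalues_nonneg ?_ ?_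
    · exact_mod_cast hH.det_eq_prod_eigenvalues.symm.trans hdet
    · exact_mod_cast hH.trace_eq_sum_eigenvalues.symm.trans htrace
  rw [hH.spectral_theorem, show RCLike.ofReal ∘ hH.eigenvalues = fun _ => (c : 𝕜) from
    funext fun i => by simp [heig i], ← smul_one_eq_diagonal, map_smul, map_one]

theorem dotProduct_self_eq_card_of_sign {R ι : Type*} [Fintype ι] [Ring R] {x : ι → R}
    (hx : ∀ i, x i = 1 ∨ x i = -1) : x ⬝ᵥ x = Fintype.card ι := by
  have : ∀ i, x i * x i = 1 := fun i => by rcases hx i with h | h <;> simp [h]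
  simp [dotProduct, this]

theorem add_mul_add_eq_ite_of_sign {R : Type*} [CommRing R] [CharZero R] [DecidableEq R]
    {a b c : R} (ha : a = 1 ∨ a = -1) (hb : b = 1 ∨ b = -1) (hc : c = 1 ∨ c = -1) :
    (a + b) * (a + c) = if b = a ∧ c = a then 4 else 0 := by
  have hne : (-1 : R) ≠ 1 := fun h => two_ne_zero (by linear_combination -h : (2 : R) = 0)
  rcases ha with rfl | rfl <;> rcases hb with rfl | rfl <;> rcases hc with rfl | rfl <;>
    simp [hne] <;> norm_num

theorem four_dvd_card_of_orthogonal_signs {R ι : Type*} [Fintype ι] [CommRing R] [CharZero R]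
    {x y z : ι → R} (hx : ∀ i, x i = 1 ∨ x i = -1) (hy : ∀ i, y i = 1 ∨ y i = -1)
    (hz : ∀ i, z i = 1 ∨ z i = -1) (hxy : x ⬝ᵥ y = 0) (hxz : x ⬝ᵥ z = 0) (hyz : y ⬝ᵥ z = 0) :
    4 ∣ Fintype.card ι := by
  classical
  have hcard : (x + y) ⬝ᵥ (x + z) = Fintype.card ι := by
    simp only [add_dotProduct, dotProduct_add, dotProduct_self_eq_card_of_sign hx, hxy, hxz, hyz,
      dotProduct_comm y x]
    ring
  have hcount : (x + y) ⬝ᵥ (x + z) = ((4 * #{i | y i = x i ∧ z i = x i} : ℕ) : R) := by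
    simp only [dotProduct, Pi.add_apply, fun i => add_mul_add_eq_ite_of_sign (hx i) (hy i) (hz i)]
    rw [sum_ite, sum_const_zero, sum_const, nsmul_eq_mul]
    push_cast; ring
  exact ⟨_, Nat.cast_injective (hcard.symm.trans hcount)⟩

theorem Matrix.trace_mul_transpose_of_sign {R ι κ : Type*} [Fintype ι] [Fintype κ] [Ring R]
    {M : Matrix ι κ R} (hM : ∀ i j, M i j = 1 ∨ M i j = -1) :
    (M * Mᵀ).trace = Fintype.card ι * Fintype.card κ := by
  simp [trace, mul_apply', dotProduct_self_eq_card_of_sign (hM _)]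

theorem Matrix.mul_transpose_eq_smul_one_of_abs_det_eq {ι : Type*} [Fintype ι] [DecidableEq ι]
    {M : Matrix ι ι ℝ} (hM : ∀ i j, M i j = 1 ∨ M i j = -1)
    (hdet : |M.det| = √(Fintype.card ι) ^ Fintype.card ι) :
    M * Mᵀ = (Fintype.card ι : ℝ) • 1 := by
  have hpsd : (M * Mᵀ).PosSemidef := by
    simpa [conjTranspose_eq_transpose_of_trivial] using posSemidef_self_mul_conjTranspose M
  have hdet' : (M * Mᵀ).det = (Fintype.card ι : ℝ) ^ Fintype.card ι := by
    rw [det_mul, det_transpose, ← abs_mul_abs_self, hdet, ← mul_pow,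
      Real.mul_self_sqrt (Nat.cast_nonneg _)]
  simpa using hpsd.eq_smul_one_of_det_eq_of_trace_eq (c := Fintype.card ι) (Nat.cast_nonneg _)
    (by simpa using hdet') (by simp [trace_mul_transpose_of_sign hM])

/-- Hadamard matrices of order `> 2` exist only in orders divisible by 4: if an
`(n+1)×(n+1)` ±1-matrix achieves the Hadamard determinant bound and `n+1 > 2`,
then `4 ∣ n+1`. -/
theorem hadamard_order_dvd_four (n : ℕ) (M : Matrix (Fin (n + 1)) (Fin (n + 1)) ℝ)
    (hM : ∀ i j, M i j = 1 ∨ M i j = -1)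
    (hdet : |M.det| = Real.sqrt (n + 1) ^ (n + 1))
    (hn : 2 < n + 1) :
    4 ∣ (n + 1) := by
  have hG : M * Mᵀ = ((n + 1 : ℕ) : ℝ) • 1 := by
    simpa using mul_transpose_eq_smul_one_of_abs_det_eq hM (by simpa using hdet)
  have horth : ∀ i j, i ≠ j → M i ⬝ᵥ M j = 0 := fun i j hij => by
    simpa [hij, mul_apply'] using congr_fun₂ hG i j
  have hrow : Function.Injective (Fin.castLE hn : Fin 3 → Fin (n + 1)) := Fin.castLE_injective hn
  simpa using four_dvd_card_of_orthogonal_signs (hM _) (hM _) (hM _)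
    (horth _ _ (hrow.ne (by decide : (0 : Fin 3) ≠ 1)))
    (horth _ _ (hrow.ne (by decide : (0 : Fin 3) ≠ 2)))
    (horth _ _ (hrow.ne (by decide : (1 : Fin 3) ≠ 2)))
end

section
/- The maximal entry function χ satisfies super-multiplicativity: χ(n₁ + n₂) ≥ χ(n₁)·χ(n₂), where χ(n) is the maximum over invertible n×n 0/1-matrices A of the largest absolute value of an entry of A⁻¹. -/
/-!
If `A` and `B` are invertible 0/1-matrices, put a single `1` (the matrix unit `E_{s p}`) below
the diagonal blocks to get the invertible 0/1-matrix `C = [[A, 0], [E_{s p}, B]]`. Its inverse is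
`[[A⁻¹, 0], [-B⁻¹ E_{s p} A⁻¹, B⁻¹]]`, whose lower-left block has the entry
`-(B⁻¹)_{r s} (A⁻¹)_{p q}`. So every product of an entry of `A⁻¹` with an entry of `B⁻¹` is
bounded by `χ(n₁ + n₂)`, and taking suprema over the entries and then over `A` and `B` gives the
claim. The suprema involved are finite because there are only finitely many 0/1-matrices of a
given size.
-/

open Matrix

/-- `χ(n)`: the maximum, over invertible `n×n` 0/1-matrices `A`, of the largest absolute
value of an entry of `A⁻¹`. -/
noncomputable def chi (n : ℕ) : ℝ :=
  sSup {x | ∃ A : Matrix (Fin n) (Fin n) ℝ,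
    (∀ i j, A i j = 0 ∨ A i j = 1) ∧ A.det ≠ 0 ∧
    x = sSup {y | ∃ i j, y = |A⁻¹ i j|}}

theorem Real.sSup_mul_sSup_le {s t : Set ℝ} {c : ℝ} (hs : ∀ x ∈ s, 0 ≤ x)
    (ht : ∀ y ∈ t, 0 ≤ y) (hc : 0 ≤ c) (h : ∀ x ∈ s, ∀ y ∈ t, x * y ≤ c) :
    sSup s * sSup t ≤ c := by
  rw [mul_comm, ← smul_eq_mul, ← Real.sSup_smul_of_nonneg (Real.sSup_nonneg ht)]
  refine Real.sSup_le ?_ hc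
  rintro _ ⟨x, hx, rfl⟩
  change sSup t * x ≤ c
  rw [mul_comm, ← smul_eq_mul, ← Real.sSup_smul_of_nonneg (hs x hx)]
  refine Real.sSup_le ?_ hc
  rintro _ ⟨y, hy, rfl⟩
  exact h x hx y hy

namespace Matrix

variable {k l m n α : Type*}

theorem mul_single_mul_apply [Fintype m] [Fintype n] [DecidableEq m] [DecidableEq n] [Semiring α]
    (M : Matrix l m α) (N : Matrix n k α) (s : m) (p : n) (c : α) (r : l) (q : k) :
    (M * single s p c * N) r q = M r s * c * N p q := by
  rw [mul_apply, Finset.sum_eq_single p (fun b _ hb => by simp [hb]) (by simp)]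
  simp

def IsZeroOne [Zero α] [One α] (A : Matrix m n α) : Prop := ∀ i j, A i j = 0 ∨ A i j = 1

theorem finite_setOf_isZeroOne [Zero α] [One α] [Finite m] [Finite n] :
    {A : Matrix m n α | A.IsZeroOne}.Finite := by
  refine (Set.Finite.pi (t := fun _ : m => Set.univ.pi fun _ : n => ({0, 1} : Set α))
    fun _ => Set.Finite.pi fun _ => Set.toFinite _).subset ?_
  exact fun A hA i _ j _ => hA i j

theorem IsZeroOne.submatrix [Zero α] [One α] {A : Matrix m n α} (hA : A.IsZeroOne)
    (f : l → m) (g : k → n) : (A.submatrix f g).IsZeroOne :=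
  fun i j => hA (f i) (g j)

theorem IsZeroOne.fromBlocks [Zero α] [One α] {A : Matrix n l α} {B : Matrix n m α}
    {C : Matrix k l α} {D : Matrix k m α} (hA : A.IsZeroOne) (hB : B.IsZeroOne)
    (hC : C.IsZeroOne) (hD : D.IsZeroOne) : (fromBlocks A B C D).IsZeroOne := by
  rintro (i | i) (j | j)
  exacts [hA i j, hB i j, hC i j, hD i j]

theorem isZeroOne_zero [Zero α] [One α] : (0 : Matrix m n α).IsZeroOne :=
  fun _ _ => Or.inl rfl

theorem isZeroOne_single [DecidableEq m] [DecidableEq n] [Zero α] [One α] (i : m) (j : n) :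
    (single i j (1 : α)).IsZeroOne := by
  intro a b
  by_cases h : i = a ∧ j = b <;> simp [h]

end Matrix

theorem sSup_abs_apply_nonneg {ι κ : Type*} (M : Matrix ι κ ℝ) :
    0 ≤ sSup {y | ∃ i j, y = |M i j|} :=
  Real.sSup_nonneg (by rintro _ ⟨i, j, rfl⟩; positivity)

theorem chi_nonneg (n : ℕ) : 0 ≤ chi n :=
  Real.sSup_nonneg (by rintro _ ⟨A, -, -, rfl⟩; exact sSup_abs_apply_nonneg _)

theorem abs_inv_apply_le_chi {n : ℕ} {ι : Type*} [Fintype ι] [DecidableEq ι] (e : ι ≃ Fin n)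
    {A : Matrix ι ι ℝ} (hA : A.IsZeroOne) (hdet : A.det ≠ 0) (i j : ι) :
    |A⁻¹ i j| ≤ chi n := by
  set A' := reindex e e A
  have hA' : A'.IsZeroOne := hA.submatrix _ _
  have hdet' : A'.det ≠ 0 := by rwa [det_reindex_self]
  have hentries : BddAbove {y | ∃ i j, y = |A'⁻¹ i j|} :=
    ((Set.finite_range fun p : Fin n × Fin n => |A'⁻¹ p.1 p.2|).subset
      (by rintro _ ⟨i, j, rfl⟩; exact ⟨(i, j), rfl⟩)).bddAbove
  have hchi : BddAbove {x | ∃ A : Matrix (Fin n) (Fin n) ℝ,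
      A.IsZeroOne ∧ A.det ≠ 0 ∧ x = sSup {y | ∃ i j, y = |A⁻¹ i j|}} :=
    ((finite_setOf_isZeroOne.image fun A : Matrix (Fin n) (Fin n) ℝ =>
      sSup {y | ∃ i j, y = |A⁻¹ i j|}).subset
        (by rintro _ ⟨A, hA, -, rfl⟩; exact ⟨A, hA, rfl⟩)).bddAbove
  calc |A⁻¹ i j| = |A'⁻¹ (e i) (e j)| := by simp [A']
    _ ≤ sSup {y | ∃ i j, y = |A'⁻¹ i j|} := le_csSup hentries ⟨_, _, rfl⟩
    _ ≤ chi n := le_csSup hchi ⟨A', hA', hdet', rfl⟩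

theorem abs_inv_apply_mul_le_chi_add {n₁ n₂ : ℕ} {A : Matrix (Fin n₁) (Fin n₁) ℝ}
    {B : Matrix (Fin n₂) (Fin n₂) ℝ} (hA : A.IsZeroOne) (hAdet : A.det ≠ 0)
    (hB : B.IsZeroOne) (hBdet : B.det ≠ 0) (p q : Fin n₁) (r s : Fin n₂) :
    |A⁻¹ p q| * |B⁻¹ r s| ≤ chi (n₁ + n₂) := by
  set C := fromBlocks A 0 (single s p 1) B
  have hC : C.IsZeroOne := hA.fromBlocks isZeroOne_zero (isZeroOne_single s p) hB
  have hCdet : C.det ≠ 0 := by simp [C, det_fromBlocks_zero₁₂, hAdet, hBdet]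
  have hinv : C⁻¹ = fromBlocks A⁻¹ 0 (-(B⁻¹ * single s p (1 : ℝ) * A⁻¹)) B⁻¹ :=
    inv_fromBlocks_zero₁₂_of_isUnit_iff _ _ _ <| by
      simp [isUnit_iff_isUnit_det, hAdet, hBdet]
  calc |A⁻¹ p q| * |B⁻¹ r s| = |C⁻¹ (.inr r) (.inl q)| := by
        rw [hinv, fromBlocks_apply₂₁, neg_apply, abs_neg, mul_single_mul_apply, mul_one,
          abs_mul, mul_comm]
    _ ≤ chi (n₁ + n₂) := abs_inv_apply_le_chi finSumFinEquiv hC hCdet _ _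

/-- Super-multiplicativity: `χ(n₁ + n₂) ≥ χ(n₁)·χ(n₂)`. -/
theorem chi_supermultiplicative (n₁ n₂ : ℕ) :
    chi n₁ * chi n₂ ≤ chi (n₁ + n₂) := by
  have hc := chi_nonneg (n₁ + n₂)
  refine Real.sSup_mul_sSup_le ?_ ?_ hc ?_
  · rintro _ ⟨A, -, -, rfl⟩; exact sSup_abs_apply_nonneg _
  · rintro _ ⟨B, -, -, rfl⟩; exact sSup_abs_apply_nonneg _
  rintro _ ⟨A, hA, hAdet, rfl⟩ _ ⟨B, hB, hBdet, rfl⟩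
  refine Real.sSup_mul_sSup_le ?_ ?_ hc ?_
  · rintro _ ⟨i, j, rfl⟩; positivity
  · rintro _ ⟨i, j, rfl⟩; positivity
  rintro _ ⟨p, q, rfl⟩ _ ⟨r, s, rfl⟩
  exact abs_inv_apply_mul_le_chi_add hA hAdet hB hBdet p q r s
end

section
/- In the cut polytope CUT(n) with n ≥ 4, the identity δ(∅) + δ({1,2}) + δ({1,3}) + δ({2,3}) = δ({1}) + δ({2}) + δ({3}) + δ({1,2,3}) holds, where the eight cut vectors involved are pairwise distinct; hence these vertices do not form the vertex set of a 7-dimensional simplex, so CUT(n) is not 4-neighborly. -/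
/-! On an edge `ij`, both sides of the identity count the cuts among the subsets of `{1,2,3}` that
separate `i` from `j`: none if `i, j ∉ {1,2,3}`, and two on each side otherwise. Since none of
these subsets contains the vertex `4`, each is recovered from its cut vector as the set of vertices
separated from `4`, so the eight vectors are distinct. An integer relation with coefficients `±1`
summing to zero is an affine dependence. -/

/-- The edge set of the complete graph `K_n`: pairs `(i,j)` with `i < j`. -/
def Edge (n : ℕ) := {p : Fin n × Fin n // p.1 < p.2}

instance (n : ℕ) : Fintype (Edge n) := Subtype.fintype _

/-- The cut vector `δ(S) ∈ {0,1}^(C(n,2))` of the cut determined by `S ⊆ [n]`: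
coordinate `ij` equals `1` iff exactly one of `i`, `j` lies in `S`. -/
def cutVec (n : ℕ) (S : Finset (Fin n)) : Edge n → ℝ :=
  fun p => if (p.1.1 ∈ S ↔ p.1.2 ∈ S) then 0 else 1


/-- The eight cut vectors `δ(∅), δ{1,2}, δ{1,3}, δ{2,3}, δ{1}, δ{2}, δ{3}, δ{1,2,3}`
of `CUT(n)` (here using the first three elements of `Fin n`). -/
noncomputable def eightCuts (n : ℕ) (hn : 4 ≤ n) : Fin 8 → (Edge n → ℝ) :=
  ![cutVec n ∅,
    cutVec n {⟨0, by omega⟩, ⟨1, by omega⟩},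
    cutVec n {⟨0, by omega⟩, ⟨2, by omega⟩},
    cutVec n {⟨1, by omega⟩, ⟨2, by omega⟩},
    cutVec n {⟨0, by omega⟩},
    cutVec n {⟨1, by omega⟩},
    cutVec n {⟨2, by omega⟩},
    cutVec n {⟨0, by omega⟩, ⟨1, by omega⟩, ⟨2, by omega⟩}]

theorem cutVec_sum_even_eq_sum_odd {n : ℕ} {a b c : Fin n}
    (hab : a ≠ b) (hac : a ≠ c) (hbc : b ≠ c) :
    cutVec n ∅ + cutVec n {a, b} + cutVec n {a, c} + cutVec n {b, c} =
      cutVec n {a} + cutVec n {b} + cutVec n {c} + cutVec n {a, b, c} := by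
  funext e
  have hij : e.1.1 ≠ e.1.2 := e.2.ne
  simp only [cutVec, Pi.add_apply, Finset.mem_insert, Finset.mem_singleton, Finset.notMem_empty]
  generalize e.1.1 = i, e.1.2 = j at *
  by_cases hi : i = a ∨ i = b ∨ i = c <;> by_cases hj : j = a ∨ j = b ∨ j = c <;>
    grind

theorem cutVec_injOn_notMem {n : ℕ} (z : Fin n) : Set.InjOn (cutVec n) {S | z ∉ S} := by
  intro S hS T hT hST
  ext i
  rcases lt_trichotomy i z with h | rfl | h
  · have := congrFun hST ⟨(i, z), h⟩
    simp only [cutVec] at this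
    by_cases hi : i ∈ S <;> by_cases hi' : i ∈ T <;> simp_all
  · simp_all
  · have := congrFun hST ⟨(z, i), h⟩
    simp only [cutVec] at this
    by_cases hi : i ∈ S <;> by_cases hi' : i ∈ T <;> simp_all

theorem not_affineIndependent_of_sum_eq_sum {k V ι : Type*} [Ring k] [Nontrivial k]
    [AddCommGroup V] [Module k V] [DecidableEq ι] {p : ι → V} {s t : Finset ι}
    (hst : Disjoint s t) (hcard : s.card = t.card) (hs : s.Nonempty)
    (hsum : ∑ i ∈ s, p i = ∑ i ∈ t, p i) : ¬ AffineIndependent k p := by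
  intro hp
  obtain ⟨i, hi⟩ := hs
  let w : ι → k := fun j => if j ∈ s then 1 else -1
  have hws : ∀ j ∈ s, w j = 1 := fun j hj => if_pos hj
  have hwt : ∀ j ∈ t, w j = -1 := fun j hj => if_neg (Finset.disjoint_right.1 hst hj)
  have hw : ∑ j ∈ s ∪ t, w j = 0 := by
    rw [Finset.sum_union hst, Finset.sum_congr rfl hws, Finset.sum_congr rfl hwt]
    simp [hcard]
  have hwp : ∑ j ∈ s ∪ t, w j • p j = 0 := by
    have hps : ∑ j ∈ s, w j • p j = ∑ j ∈ s, p j :=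
      Finset.sum_congr rfl fun j hj => by rw [hws j hj, one_smul]
    have hpt : ∑ j ∈ t, w j • p j = -∑ j ∈ t, p j := by
      rw [← Finset.sum_neg_distrib]
      exact Finset.sum_congr rfl fun j hj => by rw [hwt j hj, neg_one_smul]
    rw [Finset.sum_union hst, hps, hpt, hsum, add_neg_cancel]
  have := affineIndependent_iff.1 hp (s ∪ t) w hw hwp i (Finset.mem_union_left t hi)
  simp [hws i hi] at this

def finThreeSubsets : Fin 8 → Finset (Fin 3) :=
  ![∅, {0, 1}, {0, 2}, {1, 2}, {0}, {1}, {2}, {0, 1, 2}]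

theorem eightCuts_eq_cutVec_map (n : ℕ) (hn : 4 ≤ n) :
    eightCuts n hn = fun k => cutVec n ((finThreeSubsets k).map (Fin.castLEEmb (by omega))) := by
  funext k
  fin_cases k <;> rfl

theorem eightCuts_injective (n : ℕ) (hn : 4 ≤ n) : Function.Injective (eightCuts n hn) := by
  rw [eightCuts_eq_cutVec_map]
  have hz (S : Finset (Fin 3)) : (⟨3, hn⟩ : Fin n) ∉ S.map (Fin.castLEEmb (by omega)) := by
    simp only [Finset.mem_map, Fin.coe_castLEEmb, Fin.ext_iff, Fin.val_castLE, not_exists, not_and]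
    omega
  intro k l hkl
  have hmap := cutVec_injOn_notMem _ (hz _) (hz _) hkl
  exact (by decide : Function.Injective finThreeSubsets) (Finset.map_injective _ hmap)

/-- In `CUT(n)` with `n ≥ 4`:
`δ(∅) + δ{1,2} + δ{1,3} + δ{2,3} = δ{1} + δ{2} + δ{3} + δ{1,2,3}`, the eight cut vectors
are pairwise distinct, and hence they are affinely dependent, so they do not form the
vertex set of a 7-simplex; thus `CUT(n)` is not 4-neighborly. -/
theorem cut_not_four_neighborly (n : ℕ) (hn : 4 ≤ n) :
    (eightCuts n hn 0 + eightCuts n hn 1 + eightCuts n hn 2 + eightCuts n hn 3 =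
      eightCuts n hn 4 + eightCuts n hn 5 + eightCuts n hn 6 + eightCuts n hn 7) ∧
    Function.Injective (eightCuts n hn) ∧
    ¬ AffineIndependent ℝ (eightCuts n hn) := by
  have hsum : eightCuts n hn 0 + eightCuts n hn 1 + eightCuts n hn 2 + eightCuts n hn 3 =
      eightCuts n hn 4 + eightCuts n hn 5 + eightCuts n hn 6 + eightCuts n hn 7 :=
    cutVec_sum_even_eq_sum_odd (by simp [Fin.ext_iff]) (by simp [Fin.ext_iff])
      (by simp [Fin.ext_iff])
  refine ⟨hsum, eightCuts_injective n hn, ?_⟩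
  refine not_affineIndependent_of_sum_eq_sum (s := {0, 1, 2, 3}) (t := {4, 5, 6, 7})
    (by decide) rfl ⟨0, by decide⟩ ?_
  simpa [Finset.sum_insert, add_assoc] using hsum
end

section
/- The graph of every d-dimensional 0/1-polytope has diameter at most d; that is, any two vertices of a polytope P = conv(V) with V ⊆ {0,1}^d and dim P = d can be connected by a path of at most d edges of P (Naddef's theorem, the Hirsch bound for 0/1-polytopes). -/
/-!
Induct on the Hamming distance of the vertices `u ≠ v`. Freezing the coordinates on which `u` and
`v` agree cuts out a face `F` of `conv V` containing both, and `u` has a neighbour `z` in `F`.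
Since `z ≠ u` lie in `F`, they differ in a coordinate where `u` and `v` differ; there `z` agrees
with `v`, as all three are 0/1-vectors. So the Hamming distance from `z` to `v` is smaller.

The neighbour comes from the vertex figure of `u`: a vertex of the vertex figure is exposed by a
functional `g`, and tilting `g` by the functional exposing `u` exposes an edge at `u`.
-/

open Set

section Convex

variable {𝕜 E : Type*} [Field 𝕜] [LinearOrder 𝕜] [IsStrictOrderedRing 𝕜] [AddCommGroup E]
  [Module 𝕜 E] {A s : Set E} {ℓ : E →ₗ[𝕜] 𝕜} {M : 𝕜}

lemma isExtreme_setOf_eq_of_forall_le (h : ∀ x ∈ A, ℓ x ≤ M) :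
    IsExtreme 𝕜 A {x ∈ A | ℓ x = M} := by
  refine ⟨sep_subset _ _, fun x₁ hx₁ x₂ hx₂ x ⟨_, hx⟩ ⟨a, b, ha, hb, hab, hx_eq⟩ => ⟨hx₁, ?_⟩⟩
  subst hx_eq
  simp only [map_add, map_smul, smul_eq_mul] at hx
  have hM : a * M + b * M = M := by linear_combination M * hab
  nlinarith [h x₁ hx₁, mul_le_mul_of_nonneg_left (h x₂ hx₂) hb.le]

lemma convexHull_setOf_eq_of_forall_le (h : ∀ x ∈ s, ℓ x ≤ M) :
    convexHull 𝕜 {x ∈ s | ℓ x = M} = {x ∈ convexHull 𝕜 s | ℓ x = M} := by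
  have hsub : {x ∈ s | ℓ x = M} ⊆ {x ∈ convexHull 𝕜 s | ℓ x = M} := fun x hx =>
    ⟨subset_convexHull 𝕜 s hx.1, hx.2⟩
  refine (convexHull_min hsub
    ((convex_convexHull 𝕜 s).inter (convex_hyperplane ℓ.isLinear M))).antisymm ?_
  have hlevel : ∀ x ∈ convexHull 𝕜 {x ∈ s | ℓ x = M}, ℓ x = M := fun x hx =>
    convexHull_min (fun y hy => hy.2) (convex_hyperplane ℓ.isLinear M) hx
  have hconv : Convex 𝕜 ({x | ℓ x < M} ∪ convexHull 𝕜 {x ∈ s | ℓ x = M}) := by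
    rw [convex_iff_openSegment_subset]
    rintro y hy z hz x ⟨a, b, ha, hb, hab, rfl⟩
    have hy' : ℓ y ≤ M := hy.elim le_of_lt fun hy => (hlevel y hy).le
    have hz' : ℓ z ≤ M := hz.elim le_of_lt fun hz => (hlevel z hz).le
    have hcomb : ℓ (a • y + b • z) = a * ℓ y + b * ℓ z := by simp
    have hM : a * M + b * M = M := by linear_combination M * hab
    rcases hy with hy | hy
    · exact Or.inl <| by
        rw [mem_ofPred, hcomb]; nlinarith [mul_lt_mul_of_pos_left (show ℓ y < M from hy) ha,
          mul_le_mul_of_nonneg_left hz' hb.le]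
    rcases hz with hz | hz
    · exact Or.inl <| by
        rw [mem_ofPred, hcomb]; nlinarith [mul_lt_mul_of_pos_left (show ℓ z < M from hz) hb,
          mul_le_mul_of_nonneg_left hy' ha.le]
    exact Or.inr <| (convex_convexHull 𝕜 _) hy hz ha.le hb.le hab
  rintro x ⟨hx, hxM⟩
  have hs : s ⊆ {x | ℓ x < M} ∪ convexHull 𝕜 {x ∈ s | ℓ x = M} := fun y hy =>
    (h y hy).lt_or_eq.imp id fun hyM => subset_convexHull 𝕜 _ ⟨hy, hyM⟩
  exact (convexHull_min hs hconv hx).resolve_left hxM.not_lt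

lemma isExtreme_convexHull_setOf_eq_of_forall_le (h : ∀ x ∈ s, ℓ x ≤ M) :
    IsExtreme 𝕜 (convexHull 𝕜 s) (convexHull 𝕜 {x ∈ s | ℓ x = M}) := by
  rw [convexHull_setOf_eq_of_forall_le h]
  exact isExtreme_setOf_eq_of_forall_le fun x hx =>
    convexHull_min h (convex_halfSpace_le ℓ.isLinear M) hx

lemma isExtreme_segment_of_forall_le {x z : E} (hx : x ∈ s) (hz : z ∈ s)
    (h : ∀ a ∈ s, ℓ a ≤ ℓ x) (hzx : ℓ z = ℓ x) (htie : ∀ a ∈ s, ℓ a = ℓ x → a ∈ segment 𝕜 x z) :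
    IsExtreme 𝕜 (convexHull 𝕜 s) (segment 𝕜 x z) := by
  have hseg : convexHull 𝕜 {a ∈ s | ℓ a = ℓ x} = segment 𝕜 x z := by
    refine (convexHull_min (fun a ha => htie a ha.1 ha.2) (convex_segment x z)).antisymm ?_
    rw [← convexHull_pair]
    exact convexHull_mono (pair_subset ⟨hx, rfl⟩ ⟨hz, hzx⟩)
  rw [← hseg]
  exact isExtreme_convexHull_setOf_eq_of_forall_le h

lemma right_mem_extremePoints_segment (x z : E) : z ∈ (segment 𝕜 x z).extremePoints 𝕜 := by
  refine ⟨right_mem_segment 𝕜 x z, ?_⟩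
  rintro _ ⟨s, t, hs, ht, hst, rfl⟩ _ ⟨s', t', hs', ht', hst', rfl⟩ ⟨a, b, ha, hb, hab, heq⟩
  obtain rfl : t = 1 - s := by linarith
  obtain rfl : t' = 1 - s' := by linarith
  have hcomb : (a * s + b * s') • (x - z) = 0 := by
    linear_combination (norm := module) heq - hab • z
  rcases smul_eq_zero.1 hcomb with hzero | hxz
  · obtain rfl : s = 0 := by nlinarith [mul_nonneg hb.le hs']
    simp
  · rw [sub_eq_zero.1 hxz, ← add_smul, hst, one_smul]

lemma add_smul_mem_segment (x v : E) {μ ν : 𝕜} (hμ : 0 ≤ μ) (hμν : μ ≤ ν) :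
    x + μ • v ∈ segment 𝕜 x (x + ν • v) := by
  rw [mem_segment_iff_sameRay, add_sub_cancel_left, add_sub_add_left_eq_sub, ← sub_smul]
  exact ((SameRay.refl v).nonneg_smul_left hμ).nonneg_smul_right (sub_nonneg.2 hμν)

lemma notMem_convexHull_sdiff_of_mem_extremePoints {x : E}
    (hx : x ∈ (convexHull 𝕜 s).extremePoints 𝕜) : x ∉ convexHull 𝕜 (s \ {x}) := fun hmem =>
  ((convex_convexHull 𝕜 s).mem_extremePoints_iff_mem_sdiff_convexHull_sdiff.1 hx).2
    (convexHull_mono (sdiff_subset_sdiff_left (subset_convexHull 𝕜 s)) hmem)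

end Convex

section Polytope

variable {E : Type*} [AddCommGroup E] [Module ℝ E] [TopologicalSpace E] [IsTopologicalAddGroup E]
  [ContinuousSMul ℝ E] [LocallyConvexSpace ℝ E] [T2Space E] {s : Set E}

lemma Set.Finite.exists_forall_lt_of_mem_extremePoints (hs : s.Finite) {x : E}
    (hx : x ∈ (convexHull ℝ s).extremePoints ℝ) :
    ∃ f : StrongDual ℝ E, ∀ a ∈ s, a ≠ x → f a < f x := by
  obtain ⟨f, c, hf, hc⟩ := geometric_hahn_banach_closed_point (convex_convexHull ℝ _)
    (hs.sdiff.isCompact_convexHull ℝ).isClosed (notMem_convexHull_sdiff_of_mem_extremePoints hx)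
  exact ⟨f, fun a ha hax => (hf a (subset_convexHull ℝ _ ⟨ha, hax⟩)).trans hc⟩

lemma Set.Finite.exists_forall_lt_of_nonempty (hs : s.Finite) (hne : s.Nonempty) :
    ∃ e ∈ s, ∃ f : StrongDual ℝ E, ∀ a ∈ s, a ≠ e → f a < f e := by
  obtain ⟨e, he⟩ := (hs.isCompact_convexHull ℝ).extremePoints_nonempty hne.convexHull
  exact ⟨e, extremePoints_convexHull_subset he, hs.exists_forall_lt_of_mem_extremePoints he⟩

lemma Set.Finite.exists_isExtreme_segment (hs : s.Finite) {x y : E}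
    (hx : x ∈ (convexHull ℝ s).extremePoints ℝ) (hy : y ∈ s) (hyx : y ≠ x) :
    ∃ z ∈ s, z ≠ x ∧ IsExtreme ℝ (convexHull ℝ s) (segment ℝ x z) := by
  obtain ⟨q, hq⟩ := hs.exists_forall_lt_of_mem_extremePoints hx
  set B := s \ {x}
  have hB : B.Finite := hs.sdiff
  -- vertex figure of `x`: `x + φ b` is where the ray from `x` through `b` meets `q = q x - 1`
  set p : E → ℝ := fun b => q x - q b
  have hp : ∀ b ∈ B, 0 < p b := fun b hb => sub_pos.2 (hq b hb.1 hb.2)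
  set φ : E → E := fun b => (p b)⁻¹ • (b - x)
  have hray : ∀ b ∈ B, b = x + p b • φ b := fun b hb => by
    simp only [φ, smul_smul, mul_inv_cancel₀ (hp b hb).ne', one_smul, add_sub_cancel]
  obtain ⟨_, ⟨b₀, hb₀, rfl⟩, g, hg⟩ :=
    (hB.image φ).exists_forall_lt_of_nonempty (Nonempty.image φ (s := B) ⟨y, hy, hyx⟩)
  obtain ⟨z, ⟨hzB, hzφ⟩, hzmax⟩ := Set.exists_max_image {b ∈ B | φ b = φ b₀}
    p (hB.subset (sep_subset _ _)) ⟨b₀, hb₀, rfl⟩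
  refine ⟨z, hzB.1, hzB.2, ?_⟩
  -- tilting `g` by a multiple of `q` makes `f` maximal on `s` exactly at `x` and on the ray of `b₀`
  set t := g (φ b₀) with ht
  set f : E →ₗ[ℝ] ℝ := ((g + t • q : StrongDual ℝ E) : E →ₗ[ℝ] ℝ)
  have hgap : ∀ b ∈ B, f x - f b = p b * (t - g (φ b)) := fun b hb => by
    have hpb := (hp b hb).ne'
    simp only [f, φ, ContinuousLinearMap.coe_coe, add_apply, smul_apply, map_smul, map_sub,
      smul_eq_mul]
    field_simp
    simp only [p]
    ring
  have hf : ∀ b ∈ B, f b ≤ f x ∧ (f b = f x ↔ φ b = φ b₀) := fun b hb => by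
    have hgapb := hgap b hb
    rcases eq_or_ne (φ b) (φ b₀) with h | h
    · rw [h, ← ht, sub_self, mul_zero] at hgapb
      exact ⟨by linarith, iff_of_true (by linarith) h⟩
    · have := hg _ (mem_image_of_mem φ hb) h
      exact ⟨by nlinarith [hp b hb], iff_of_false (by nlinarith [hp b hb]) h⟩
  have hle : ∀ a ∈ s, f a ≤ f x := fun a ha =>
    (eq_or_ne a x).elim (fun hax => hax ▸ le_rfl) fun hax => (hf a ⟨ha, hax⟩).1
  refine isExtreme_segment_of_forall_le (extremePoints_convexHull_subset hx) hzB.1 hle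
    ((hf z hzB).2.2 hzφ) fun a ha hfa => ?_
  rcases eq_or_ne a x with rfl | hax
  · exact left_mem_segment ℝ _ _
  have haB : a ∈ B := ⟨ha, hax⟩
  have haφ : φ a = φ b₀ := (hf a haB).2.1 hfa
  rw [hray a haB, hray z hzB, haφ, hzφ]
  exact add_smul_mem_segment x _ (hp a haB).le (hzmax a ⟨haB, haφ⟩)

end Polytope

variable (𝕜 : Type*) {E : Type*} [Semiring 𝕜] [PartialOrder 𝕜] [AddCommMonoid E] [SMul 𝕜 E] in
def edgeGraph (A : Set E) : SimpleGraph (A.extremePoints 𝕜) where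
  Adj x y := x ≠ y ∧ IsExtreme 𝕜 A (segment 𝕜 (x : E) y)
  symm := ⟨fun _ _ ⟨hne, hseg⟩ => ⟨hne.symm, by rwa [segment_symm]⟩⟩
  loopless := ⟨fun _ h => h.1 rfl⟩

section ZeroOne

variable {ι : Type*} {V : Set (ι → ℝ)}

lemma finite_of_forall_eq_zero_or_one [Finite ι] (hV : ∀ x ∈ V, ∀ i, x i = 0 ∨ x i = 1) :
    V.Finite :=
  (Set.Finite.pi fun _ => (Set.toFinite {0, 1})).subset fun x hx =>
    mem_univ_pi.2 fun i => hV x hx i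

lemma isExtreme_convexHull_setOf_forall_eq (hV : ∀ x ∈ V, ∀ i, x i = 0 ∨ x i = 1)
    {u : ι → ℝ} (hu : ∀ i, u i = 0 ∨ u i = 1) (T : Finset ι) :
    IsExtreme ℝ (convexHull ℝ V) (convexHull ℝ {a ∈ V | ∀ i ∈ T, a i = u i}) := by
  let ℓ : (ι → ℝ) →ₗ[ℝ] ℝ := ∑ i ∈ T, (2 * u i - 1) • LinearMap.proj i
  have hcoord : ∀ c a : ℝ, (c = 0 ∨ c = 1) → (a = 0 ∨ a = 1) →
      (2 * c - 1) * a ≤ c ∧ ((2 * c - 1) * a = c ↔ a = c) := by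
    rintro c a (rfl | rfl) (rfl | rfl) <;> norm_num
  have hℓ : ∀ a, ℓ a = ∑ i ∈ T, (2 * u i - 1) * a i := fun a => by simp [ℓ]
  have hle : ∀ a ∈ V, ∀ i ∈ T, (2 * u i - 1) * a i ≤ u i := fun a ha i _ =>
    (hcoord _ _ (hu i) (hV a ha i)).1
  have hface : {a ∈ V | ∀ i ∈ T, a i = u i} = {a ∈ V | ℓ a = ∑ i ∈ T, u i} := by
    ext a
    refine and_congr_right fun ha => ?_
    rw [hℓ, Finset.sum_eq_sum_iff_of_le (hle a ha)]
    exact forall₂_congr fun i _ => (hcoord _ _ (hu i) (hV a ha i)).2.symm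
  rw [hface]
  exact isExtreme_convexHull_setOf_eq_of_forall_le fun a ha =>
    (hℓ a).trans_le (Finset.sum_le_sum (hle a ha))

lemma hammingDist_lt_of_eq_zero_or_one [Fintype ι] {x y z : ι → ℝ}
    (hx : ∀ i, x i = 0 ∨ x i = 1) (hy : ∀ i, y i = 0 ∨ y i = 1) (hz : ∀ i, z i = 0 ∨ z i = 1)
    (hagree : ∀ i, x i = y i → z i = x i) (hzx : z ≠ x) :
    hammingDist z y < hammingDist x y := by
  classical
  obtain ⟨j, hj⟩ := Function.ne_iff.1 hzx
  refine Finset.card_lt_card <| (Finset.ssubset_iff_of_subset fun i => ?_).2 ⟨j, ?_, ?_⟩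
  · simp only [Finset.mem_filter, Finset.mem_univ, true_and]
    exact mt fun h => (hagree i h).trans h
  · simpa using mt (hagree j) hj
  · have : x j ≠ y j := mt (hagree j) hj
    simp only [Finset.mem_filter, Finset.mem_univ, true_and, not_not]
    rcases hx j with h₁ | h₁ <;> rcases hy j with h₂ | h₂ <;> rcases hz j with h₃ | h₃ <;>
      simp_all

theorem exists_walk_length_le_hammingDist [Fintype ι] (hV : ∀ x ∈ V, ∀ i, x i = 0 ∨ x i = 1)
    (u v : (convexHull ℝ V).extremePoints ℝ) :
    ∃ p : (edgeGraph ℝ (convexHull ℝ V)).Walk u v, p.length ≤ hammingDist (u : ι → ℝ) v := by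
  classical
  induction hn : hammingDist (u : ι → ℝ) v using Nat.strong_induction_on generalizing u with
  | _ n ih =>
  obtain rfl | huv := eq_or_ne u v
  · exact ⟨.nil, by simp⟩
  have huV : (u : ι → ℝ) ∈ V := extremePoints_convexHull_subset u.2
  have hvV : (v : ι → ℝ) ∈ V := extremePoints_convexHull_subset v.2
  set F := {a ∈ V | ∀ i ∈ Finset.univ.filter fun i => u.1 i = v.1 i, a i = u.1 i}
  have hFV : IsExtreme ℝ (convexHull ℝ V) (convexHull ℝ F) :=
    isExtreme_convexHull_setOf_forall_eq hV (hV _ huV) _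
  have huF : (u : ι → ℝ) ∈ (convexHull ℝ F).extremePoints ℝ :=
    inter_extremePoints_subset_extremePoints_of_subset hFV.subset
      ⟨subset_convexHull ℝ F ⟨huV, fun _ _ => rfl⟩, u.2⟩
  have hvF : (v : ι → ℝ) ∈ F := ⟨hvV, by simp +contextual⟩
  obtain ⟨z, hzF, hzu, hseg⟩ := ((finite_of_forall_eq_zero_or_one hV).subset (sep_subset _ _))
    |>.exists_isExtreme_segment huF hvF (Subtype.coe_injective.ne huv.symm)
  have hsegV := hFV.trans hseg
  let z' : (convexHull ℝ V).extremePoints ℝ :=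
    ⟨z, hsegV.extremePoints_subset_extremePoints (right_mem_extremePoints_segment _ _)⟩
  have hadj : (edgeGraph ℝ (convexHull ℝ V)).Adj u z' :=
    ⟨fun h => hzu (congrArg Subtype.val h).symm, hsegV⟩
  have hlt : hammingDist z (v : ι → ℝ) < n := hn ▸ hammingDist_lt_of_eq_zero_or_one (hV _ huV)
    (hV _ hvV) (hV _ hzF.1) (fun i hi => hzF.2 i (by simpa using hi)) hzu
  obtain ⟨p, hp⟩ := ih _ hlt z' rfl
  exact ⟨.cons hadj p, by rw [SimpleGraph.Walk.length_cons]; omega⟩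

end ZeroOne

theorem naddef_diameter_general (d : ℕ) (V : Set (Fin d → ℝ))
    (hV : ∀ x ∈ V, ∀ i, x i = 0 ∨ x i = 1)
    (u v : Fin d → ℝ)
    (hu : u ∈ Set.extremePoints ℝ (convexHull ℝ V))
    (hv : v ∈ Set.extremePoints ℝ (convexHull ℝ V)) :
    ∃ k, k ≤ d ∧ ∃ w : Fin (k + 1) → (Fin d → ℝ),
      w 0 = u ∧ w (Fin.last k) = v ∧
      (∀ i, w i ∈ Set.extremePoints ℝ (convexHull ℝ V)) ∧
      (∀ i : Fin k, w i.castSucc ≠ w i.succ ∧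
        IsExtreme ℝ (convexHull ℝ V) (segment ℝ (w i.castSucc) (w i.succ))) := by
  obtain ⟨p, hp⟩ := exists_walk_length_le_hammingDist hV ⟨u, hu⟩ ⟨v, hv⟩
  have hk : p.length ≤ d := hp.trans (hammingDist_le_card_fintype.trans_eq (Fintype.card_fin d))
  refine ⟨p.length, hk, fun i => p.getVert i, by simp, by simp, fun i => (p.getVert i).2,
    fun i => ?_⟩
  obtain ⟨hne, hseg⟩ := p.adj_getVert_succ i.is_lt
  exact ⟨Subtype.coe_injective.ne hne, hseg⟩

/-- Naddef's theorem (the Hirsch bound for 0/1-polytopes): any two vertices of a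
`d`-dimensional 0/1-polytope `P = conv V`, `V ⊆ {0,1}^d`, are connected by a path
of at most `d` edges of `P`. -/
theorem naddef_diameter (d : ℕ) (V : Set (Fin d → ℝ))
    (hV : ∀ x ∈ V, ∀ i, x i = 0 ∨ x i = 1)
    (hfull : affineSpan ℝ (convexHull ℝ V) = ⊤)
    (u v : Fin d → ℝ)
    (hu : u ∈ Set.extremePoints ℝ (convexHull ℝ V))
    (hv : v ∈ Set.extremePoints ℝ (convexHull ℝ V)) :
    ∃ k, k ≤ d ∧ ∃ w : Fin (k + 1) → (Fin d → ℝ),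
      w 0 = u ∧ w (Fin.last k) = v ∧
      (∀ i, w i ∈ Set.extremePoints ℝ (convexHull ℝ V)) ∧
      (∀ i : Fin k, w i.castSucc ≠ w i.succ ∧
        IsExtreme ℝ (convexHull ℝ V) (segment ℝ (w i.castSucc) (w i.succ))) :=
  naddef_diameter_general d V hV u v hu hv
end
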